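/- arXiv:2409.02047 — 2 statements merged into one kernel-verified Lean document; each statement's English description precedes it below -/
import Mathlib

section
/- Let k ≥ 2, l ≥ 3, and n be positive integers such that F_l^k exactly divides F_n, l ≡ 3 (mod 6), and 2^(k-1) divides n/l. Then F_l^(k-1) exactly divides n/l. -/
/-!
Expanding `φ ^ (l * m) = (F_l φ + F_{l-1}) ^ m` binomially and comparing coefficients of `φ`
gives `F_{lm} = F_l G` with `G = ∑_{i ≥ 1} C(m, i) F_l ^ (i-1) F_{l-1} ^ (m-i) F_i`.
For a prime `p ∣ F_l`, the identity `i C(m, i) = m C(m-1, i-1)` shows that every term of `G` is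
divisible by `p ^ v_p(m)`, and for odd `p` every term except `m F_{l-1} ^ (m-1)` even by
`p ^ (v_p(m) + 1)`; since `F_{l-1}` is prime to `F_l`, this gives `v_p(G) = v_p(m)` for odd `p`.
The first fact turns `F_l ^ k ∣ n / l` into `F_l ^ (k+1) ∣ F_n`. The second turns
`F_l ^ k ∣ F_n` into divisibility of `n / l` by the odd part of `F_l ^ (k-1)`; as `l ≡ 3 (mod 6)`
forces `F_l ≡ 2 (mod 4)`, the missing power of two is `2 ^ (k-1)`.
-/

open Finset
open Nat (fib)
open scoped goldenRatio

lemma Real.goldenRatio_pow_eq (n : ℕ) : φ ^ n = fib n * φ + ((fib (n + 1) : ℝ) - fib n) := by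
  cases n with
  | zero => simp
  | succ n =>
    rw [← Real.goldenRatio_mul_fib_succ_add_fib, Nat.fib_add_two]
    push_cast
    ring

lemma Real.eq_of_mul_goldenRatio_add_eq {a b c d : ℤ} (h : a * φ + b = c * φ + d) : a = c := by
  by_contra hac
  have hirr : Irrational ((a - c : ℤ) * φ) :=
    Real.goldenRatio_irrational.intCast_mul (sub_ne_zero.mpr hac)
  exact hirr.ne_int (d - b) (by push_cast; linarith)

theorem Nat.fib_succ_mul_eq_sum (j m : ℕ) :
    fib ((j + 1) * m) =
      ∑ i ∈ range (m + 1), m.choose i * fib (j + 1) ^ i * fib j ^ (m - i) * fib i := by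
  have hpow : φ ^ ((j + 1) * m) = ∑ i ∈ range (m + 1),
      (m.choose i * fib (j + 1) ^ i * fib j ^ (m - i) : ℝ) * φ ^ i := by
    rw [pow_mul, ← Real.goldenRatio_mul_fib_succ_add_fib, add_pow]
    exact sum_congr rfl fun i _ => by rw [mul_pow]; ring
  simp only [Real.goldenRatio_pow_eq, mul_add, sum_add_distrib, ← mul_assoc, ← sum_mul] at hpow
  exact_mod_cast Real.eq_of_mul_goldenRatio_add_eq (a := fib ((j + 1) * m))
    (c := ∑ i ∈ range (m + 1), m.choose i * fib (j + 1) ^ i * fib j ^ (m - i) * fib i)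
    (b := fib ((j + 1) * m + 1) - fib ((j + 1) * m))
    (d := ∑ i ∈ range (m + 1),
      m.choose i * fib (j + 1) ^ i * fib j ^ (m - i) * ((fib (i + 1) : ℤ) - fib i))
    (by push_cast; exact hpow)

namespace Nat

theorem factorization_succ_add_one_le {p i : ℕ} (hp : p.Prime) (hp2 : p ≠ 2) (hi : 1 ≤ i) :
    (i + 1).factorization p + 1 ≤ i := by
  by_contra! h
  have hp3 : 3 ≤ p := by have := hp.two_le; omega
  have : 3 ^ i ≤ i + 1 := calc
    3 ^ i ≤ p ^ i := Nat.pow_le_pow_left hp3 i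
    _ ≤ p ^ (i + 1).factorization p := Nat.pow_le_pow_right hp.pos (by omega)
    _ ≤ i + 1 := ordProj_le p i.succ_ne_zero
  have := i.lt_two_pow_self
  have := Nat.pow_lt_pow_left (show 2 < 3 by norm_num) (show i ≠ 0 by omega)
  omega

theorem pow_add_dvd_choose_succ_mul_pow {p v s m i : ℕ} (hp : p.Prime) (hv : p ^ v ∣ m)
    (hs : (i + 1).factorization p + s ≤ i) : p ^ (v + s) ∣ m.choose (i + 1) * p ^ i := by
  have hmul : p ^ v ∣ (i + 1) * m.choose (i + 1) := by
    rcases m with _ | m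
    · simp
    · rw [mul_comm, ← add_one_mul_choose_eq]
      exact hv.mul_right _
  replace hmul : p ^ v ∣ ordCompl[p] (i + 1) * (ordProj[p] (i + 1) * m.choose (i + 1)) := by
    rwa [mul_left_comm, ← mul_assoc, ordProj_mul_ordCompl_eq_self]
  have hproj := ((coprime_ordCompl hp i.succ_ne_zero).pow_left v).dvd_of_dvd_mul_left hmul
  calc p ^ (v + s) ∣ ordProj[p] (i + 1) * m.choose (i + 1) * p ^ s := by
        rw [pow_add]; exact mul_dvd_mul_right hproj _
    _ = m.choose (i + 1) * p ^ ((i + 1).factorization p + s) := by ring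
    _ ∣ m.choose (i + 1) * p ^ i := mul_dvd_mul_left _ (pow_dvd_pow p hs)

def fibMulQuot (l m : ℕ) : ℕ :=
  ∑ i ∈ range m, m.choose (i + 1) * fib l ^ i * fib (l - 1) ^ (m - 1 - i) * fib (i + 1)

theorem fib_mul_eq_fib_mul_fibMulQuot (l m : ℕ) : fib (l * m) = fib l * fibMulQuot l m := by
  rcases l with _ | j
  · simp
  rw [fib_succ_mul_eq_sum, sum_range_succ', fibMulQuot, mul_sum]
  simp only [fib_zero, mul_zero, add_zero, Nat.add_sub_cancel]
  refine sum_congr rfl fun i _ => ?_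
  rw [show m - (i + 1) = m - 1 - i by omega, pow_succ]
  ring

theorem pow_dvd_fibMulQuot {p v l m : ℕ} (hp : p.Prime) (hpl : p ∣ fib l)
    (hv : p ^ v ∣ m) : p ^ v ∣ fibMulQuot l m := by
  refine dvd_sum fun i _ => ?_
  have hi : (i + 1).factorization p + 0 ≤ i := by simpa using factorization_lt p i.succ_ne_zero
  have := (pow_add_dvd_choose_succ_mul_pow hp hv hi).trans
    (mul_dvd_mul_left (m.choose (i + 1)) (pow_dvd_pow_of_dvd hpl i))
  exact (this.mul_right _).mul_right _

theorem fibMulQuot_modEq {p v l m : ℕ} (hp : p.Prime) (hp2 : p ≠ 2) (hpl : p ∣ fib l)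
    (hv : p ^ v ∣ m) : fibMulQuot l m ≡ m * fib (l - 1) ^ (m - 1) [MOD p ^ (v + 1)] := by
  rcases m with _ | m
  · rfl
  have htail : p ^ (v + 1) ∣ ∑ i ∈ range m, (m + 1).choose (i + 1 + 1) * fib l ^ (i + 1) *
      fib (l - 1) ^ (m + 1 - 1 - (i + 1)) * fib (i + 1 + 1) := by
    refine dvd_sum fun i _ => ?_
    have := (pow_add_dvd_choose_succ_mul_pow hp hv
      (factorization_succ_add_one_le hp hp2 (le_add_left 1 i))).trans
      (mul_dvd_mul_left ((m + 1).choose (i + 1 + 1)) (pow_dvd_pow_of_dvd hpl (i + 1)))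
    exact (this.mul_right _).mul_right _
  simpa [fibMulQuot, sum_range_succ'] using
    (modEq_zero_iff_dvd.2 htail).add_right ((m + 1) * fib (l - 1) ^ m)

theorem pow_dvd_of_pow_dvd_fibMulQuot {p v l m : ℕ} (hl : l ≠ 0) (hp : p.Prime) (hp2 : p ≠ 2)
    (hpl : p ∣ fib l) (h : p ^ v ∣ fibMulQuot l m) : p ^ v ∣ m := by
  have hpu : Coprime p (fib (l - 1)) := by
    have := fib_coprime_fib_succ (l - 1)
    rw [Nat.sub_add_cancel (one_le_iff_ne_zero.mpr hl)] at this
    exact this.symm.coprime_dvd_left hpl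
  induction v with
  | zero => exact one_dvd m
  | succ v ih =>
    have hv := ih ((pow_dvd_pow p v.le_succ).trans h)
    exact (hpu.pow (v + 1) (m - 1)).dvd_of_dvd_mul_right
      (((fibMulQuot_modEq hp hp2 hpl hv).dvd_iff dvd_rfl).mp h)

theorem fib_pow_succ_dvd_fib_mul {j l m : ℕ} (h : fib l ^ j ∣ m) :
    fib l ^ (j + 1) ∣ fib (l * m) := by
  rw [fib_mul_eq_fib_mul_fibMulQuot, pow_succ']
  refine mul_dvd_mul_left _ ((dvd_iff_prime_pow_dvd_dvd _ _).mpr fun p s hp hps => ?_)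
  rcases s with _ | s
  · exact one_dvd _
  exact pow_dvd_fibMulQuot hp (hp.dvd_of_dvd_pow ((dvd_pow_self p s.succ_ne_zero).trans hps))
    (hps.trans h)

theorem dvd_of_fib_mul_dvd_fib_mul {d j l m : ℕ} (hl : l ≠ 0) (hd : Odd d)
    (hdl : d ∣ fib l ^ j) (h : fib l * d ∣ fib (l * m)) : d ∣ m := by
  rw [fib_mul_eq_fib_mul_fibMulQuot] at h
  have hG := Nat.dvd_of_mul_dvd_mul_left (fib_pos.mpr (pos_of_ne_zero hl)) h
  refine (dvd_iff_prime_pow_dvd_dvd _ _).mpr fun p s hp hps => ?_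
  rcases s with _ | s
  · exact one_dvd _
  have hpd : p ∣ d := (dvd_pow_self p s.succ_ne_zero).trans hps
  exact pow_dvd_of_pow_dvd_fibMulQuot hl hp (hd.ne_two_of_dvd_nat hpd)
    (hp.dvd_of_dvd_pow (hpd.trans hdl)) (hps.trans hG)

theorem dvd_of_fib_dvd_fib {l n : ℕ} (hl : 3 ≤ l) (h : fib l ∣ fib n) : l ∣ n := by
  have hgcd : fib (l.gcd n) = fib l := by rw [fib_gcd, gcd_eq_left h]
  have hfib : 2 ≤ fib l := fib_mono hl
  have hg2 : 2 ≤ l.gcd n := by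
    by_contra! hlt
    interval_cases hg : l.gcd n <;> simp only [fib_zero, fib_one] at hgcd <;> omega
  have := fib_strictMonoOn.injOn hg2 (show 2 ≤ l by omega) hgcd
  exact this ▸ gcd_dvd_right l n

theorem fib_mod_four_of_mod_six_eq_three {l : ℕ} (hl : l % 6 = 3) : fib l % 4 = 2 := by
  have hper : Function.Periodic (fun n => fib n % 4) 6 := fun n => by
    have := fib_add n 5
    simp only [show fib 5 = 5 from rfl, show fib (5 + 1) = 8 from rfl] at this
    simp only [show n + 6 = n + 5 + 1 by omega, this]
    omega
  rw [← hper.map_mod_nat l, hl]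
  rfl

end Nat

theorem exact_div_fib_of_three_mod_six_of_two_pow_dvd_general (k l n : ℕ)
    (hk : 2 ≤ k) (hl : 3 ≤ l)
    (hdvd : Nat.fib l ^ k ∣ Nat.fib n) (hndvd : ¬ Nat.fib l ^ (k + 1) ∣ Nat.fib n)
    (hmod : l % 6 = 3) (h2 : 2 ^ (k - 1) ∣ n / l) :
    Nat.fib l ^ (k - 1) ∣ n / l ∧ ¬ Nat.fib l ^ k ∣ n / l := by
  obtain ⟨m, rfl⟩ := Nat.dvd_of_fib_dvd_fib hl ((dvd_pow_self _ (by omega)).trans hdvd)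
  rw [Nat.mul_div_cancel_left m (by omega)] at h2 ⊢
  refine ⟨?_, fun h => hndvd (Nat.fib_pow_succ_dvd_fib_mul h)⟩
  obtain ⟨c, hc⟩ : ∃ c, fib l = 2 * (2 * c + 1) :=
    ⟨fib l / 4, by have := Nat.fib_mod_four_of_mod_six_eq_three hmod; omega⟩
  have hcl : 2 * c + 1 ∣ fib l := Dvd.intro_left 2 hc.symm
  have hck : (2 * c + 1) ^ (k - 1) ∣ m := by
    refine Nat.dvd_of_fib_mul_dvd_fib_mul (by omega) (odd_two_mul_add_one c).pow
      (pow_dvd_pow_of_dvd hcl (k - 1)) ?_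
    calc fib l * (2 * c + 1) ^ (k - 1) ∣ fib l * fib l ^ (k - 1) :=
          mul_dvd_mul_left _ (pow_dvd_pow_of_dvd hcl _)
      _ = fib l ^ k := by rw [← pow_succ', Nat.sub_add_cancel (by omega)]
      _ ∣ fib (l * m) := hdvd
  rw [hc, mul_pow]
  exact Nat.Coprime.mul_dvd_of_dvd_of_dvd
    (Nat.Coprime.pow _ _ (Nat.coprime_two_left.mpr (odd_two_mul_add_one c))) h2 hck

theorem exact_div_fib_of_three_mod_six_of_two_pow_dvd (k l n : ℕ)
    (hk : 2 ≤ k) (hl : 3 ≤ l) (hn : 1 ≤ n)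
    (hdvd : Nat.fib l ^ k ∣ Nat.fib n) (hndvd : ¬ Nat.fib l ^ (k + 1) ∣ Nat.fib n)
    (hmod : l % 6 = 3) (h2 : 2 ^ (k - 1) ∣ n / l) :
    Nat.fib l ^ (k - 1) ∣ n / l ∧ ¬ Nat.fib l ^ k ∣ n / l :=
  exact_div_fib_of_three_mod_six_of_two_pow_dvd_general k l n hk hl hdvd hndvd hmod h2
end

section
/- Let k ≥ 2, l ≥ 3, and n be positive integers such that F_l^k exactly divides F_n, l ≡ 3 (mod 6), and 2^(k-1) does not divide n/l. Then F_l^(k-2) exactly divides n/l. -/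
/-!
For a prime `p ∣ F_m`, expanding `(F_m A + F_{m-1})^t`, where `A` is the Fibonacci matrix
`!![1, 1; 1, 0]`, gives `F_{mt} ≡ t F_m F_{m-1}^{t-1}` modulo `p ^ (v_p(F_m) + v_p(t) + 1)`,
both for `p ∤ t` and for `t = p` when `p` is odd or `4 ∣ F_m`. Since `p ∤ F_{m-1}`, this
yields the lifting-the-exponent formula `v_p(F_{mt}) = v_p(F_m) + v_p(t)`.

Write `n = l m`. For odd `p ∣ F_l`, the formula turns `F_l^k ∣ F_n` into
`k v_p(F_l) ≤ v_p(F_l) + v_p(m)`. For `p = 2`, the formula at `m = 3` and `m = 6` (`F_6 = 8`)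
gives `v_2(F_l) = 1` and `v_2(F_n) ≤ v_2(n) + 2 = v_2(m) + 2`. Finally `F_l` is even, so
`F_l^(k-1) ∣ m` would force `2^(k-1) ∣ m`.
-/

open Finset

namespace Nat

theorem factorization_eq_of_modEq {p a x y : ℕ} (hp : p.Prime) (hy : y ≠ 0)
    (hya : y.factorization p < a) (hxy : x ≡ y [MOD p ^ a]) :
    x.factorization p = y.factorization p := by
  have hdvd : ∀ j ≤ a, p ^ j ∣ x ↔ p ^ j ∣ y :=
    fun j hj ↦ hxy.dvd_iff (pow_dvd_pow p hj)
  have hnot : ¬ p ^ (y.factorization p + 1) ∣ x := by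
    rw [hdvd _ hya, hp.pow_dvd_iff_le_factorization hy]; omega
  have hx : x ≠ 0 := by rintro rfl; exact hnot (dvd_zero _)
  rw [hp.pow_dvd_iff_le_factorization hx] at hnot
  have := (hp.pow_dvd_iff_le_factorization hx).1 ((hdvd _ hya.le).2 (ordProj_dvd y p))
  omega

theorem pow_factorization_add_dvd_pow_succ {p n : ℕ} (h : p ∣ n) (j : ℕ) :
    p ^ (n.factorization p + j) ∣ n ^ (j + 1) := by
  rw [pow_add, pow_succ']
  exact mul_dvd_mul (ordProj_dvd n p) (pow_dvd_pow_of_dvd h j)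

theorem not_dvd_fib_of_dvd_fib_succ {p m : ℕ} (hp : p.Prime) (h : p ∣ fib (m + 1)) :
    ¬ p ∣ fib m := fun h' ↦
  hp.one_lt.ne' (Nat.eq_one_of_dvd_coprimes (fib_coprime_fib_succ m) h' h)

theorem fib_dvd_fib_iff {l n : ℕ} (hl : 3 ≤ l) : fib l ∣ fib n ↔ l ∣ n := by
  refine ⟨fun h ↦ ?_, fib_dvd l n⟩
  have hfib : fib (Nat.gcd l n) = fib l := by rw [fib_gcd, Nat.gcd_eq_left h]
  have hle : Nat.gcd l n ≤ l := Nat.le_of_dvd (by omega) (Nat.gcd_dvd_left l n)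
  by_contra hln
  have hlt : Nat.gcd l n < l := hle.lt_of_ne fun h' ↦ hln (h' ▸ Nat.gcd_dvd_right l n)
  have := (fib_mono (Nat.le_sub_one_of_lt hlt)).trans_lt
    (fib_lt_fib_succ (n := l - 1) (by omega))
  rw [Nat.sub_add_cancel (by omega), hfib] at this
  exact this.false

theorem not_two_dvd_fib_of_not_three_dvd {n : ℕ} (hn : ¬ 3 ∣ n) : ¬ 2 ∣ fib n := by
  have hcop : Nat.gcd 3 n = 1 := (prime_three.coprime_iff_not_dvd).2 hn
  have hfib := fib_gcd 3 n
  rw [hcop, fib_one] at hfib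
  exact (prime_two.coprime_iff_not_dvd).1 hfib.symm

def fibMatrix : Matrix (Fin 2) (Fin 2) ℕ := !![1, 1; 1, 0]

theorem fibMatrix_pow_succ (n : ℕ) :
    fibMatrix ^ (n + 1) = fib (n + 1) • fibMatrix + fib n • 1 := by
  have hsq : fibMatrix * fibMatrix = fibMatrix + 1 := by
    ext i j; fin_cases i <;> fin_cases j <;> simp [fibMatrix]
  induction n with
  | zero => simp
  | succ n ih =>
    rw [pow_succ, ih, add_mul, smul_mul_assoc, smul_mul_assoc, one_mul, hsq, fib_add_two]
    module

theorem fibMatrix_pow_apply_zero_one (n : ℕ) : (fibMatrix ^ n) 0 1 = fib n := by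
  cases n with
  | zero => simp
  | succ n => rw [fibMatrix_pow_succ]; simp [fibMatrix, Matrix.natCast_apply]

theorem fib_succ_mul_eq_sum_s7 (m t : ℕ) :
    fib ((m + 1) * t) =
      ∑ i ∈ range (t + 1), t.choose i * fib (m + 1) ^ i * fib m ^ (t - i) * fib i := by
  have hcomm : Commute (fib (m + 1) • fibMatrix) (fib m • (1 : Matrix (Fin 2) (Fin 2) ℕ)) :=
    ((Commute.one_right _).smul_right _).smul_left _
  rw [← fibMatrix_pow_apply_zero_one, pow_mul, fibMatrix_pow_succ, hcomm.add_pow,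
    Matrix.sum_apply]
  refine sum_congr rfl fun i _ ↦ ?_
  rw [smul_pow, smul_pow, one_pow, ← fibMatrix_pow_apply_zero_one i, ← nsmul_one (t.choose i)]
  simp only [mul_smul_comm, mul_one, Matrix.smul_apply, smul_eq_mul]
  ring

theorem fib_succ_mul_modEq {m t d : ℕ}
    (h : ∀ i ∈ Icc 2 t, d ∣ t.choose i * fib (m + 1) ^ i) :
    fib ((m + 1) * t) ≡ t * fib (m + 1) * fib m ^ (t - 1) [MOD d] := by
  rw [← ZMod.natCast_eq_natCast_iff, fib_succ_mul_eq_sum_s7, Nat.cast_sum,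
    sum_eq_single 1]
  · simp
  · intro i hi hi1
    rcases Nat.lt_or_ge i 2 with hi2 | hi2
    · obtain rfl : i = 0 := by omega
      simp
    · rw [(ZMod.natCast_eq_zero_iff _ _).2]
      have hit : i ≤ t := Nat.lt_succ_iff.1 (mem_range.1 hi)
      exact ((h i (mem_Icc.2 ⟨hi2, hit⟩)).mul_right _).mul_right _
  · intro h1
    obtain rfl : t = 0 := by simpa using h1
    simp

theorem factorization_fib_mul_of_dvd_choose_mul {p m t : ℕ} (hp : p.Prime) (hm : m ≠ 0)
    (hpm : p ∣ fib m) (ht : t ≠ 0)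
    (h : ∀ i ∈ Icc 2 t,
      p ^ ((fib m).factorization p + t.factorization p + 1) ∣ t.choose i * fib m ^ i) :
    (fib (m * t)).factorization p = (fib m).factorization p + t.factorization p := by
  obtain ⟨m, rfl⟩ := exists_eq_add_one_of_ne_zero hm
  set e := (fib (m + 1)).factorization p
  have hpm' := not_dvd_fib_of_dvd_fib_succ hp hpm
  have hfib : fib m ≠ 0 := by rintro h0; simp [h0] at hpm'
  have hne : t * fib (m + 1) ≠ 0 := mul_ne_zero ht (by simp)
  have hmain : (t * fib (m + 1) * fib m ^ (t - 1)).factorization p = e + t.factorization p := by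
    rw [factorization_mul hne (pow_ne_zero _ hfib), factorization_mul ht (by simp),
      factorization_pow]
    simp only [Finsupp.add_apply, Finsupp.smul_apply, factorization_eq_zero_of_not_dvd hpm',
      smul_zero]
    omega
  rw [← hmain]
  exact factorization_eq_of_modEq hp (mul_ne_zero hne (pow_ne_zero _ hfib))
    (hmain ▸ lt_add_one _) (fib_succ_mul_modEq h)

theorem factorization_fib_mul_of_not_dvd {p m t : ℕ} (hp : p.Prime) (hm : m ≠ 0)
    (hpm : p ∣ fib m) (hpt : ¬ p ∣ t) :
    (fib (m * t)).factorization p = (fib m).factorization p := by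
  have ht : t ≠ 0 := by rintro rfl; exact hpt (dvd_zero p)
  have key := factorization_fib_mul_of_dvd_choose_mul hp hm hpm ht fun i hi ↦ by
    rw [factorization_eq_zero_of_not_dvd hpt, add_zero]
    exact ((pow_factorization_add_dvd_pow_succ hpm 1).trans
      (pow_dvd_pow _ (mem_Icc.1 hi).1)).mul_left _
  rwa [factorization_eq_zero_of_not_dvd hpt, add_zero] at key

theorem factorization_fib_mul_self {p m : ℕ} (hp : p.Prime) (hm : m ≠ 0)
    (hpm : p ∣ fib m) (hp2 : p ≠ 2 ∨ 4 ∣ fib m) :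
    (fib (m * p)).factorization p = (fib m).factorization p + 1 := by
  rw [← hp.factorization_self]
  refine factorization_fib_mul_of_dvd_choose_mul hp hm hpm hp.ne_zero fun i hi ↦ ?_
  rw [hp.factorization_self]
  rcases (mem_Icc.1 hi).1.eq_or_lt with rfl | hi3
  · rcases eq_or_ne p 2 with rfl | hodd
    · rw [add_assoc, pow_add, sq (fib m)]
      exact (mul_dvd_mul (ordProj_dvd _ 2) (hp2.resolve_left (· rfl))).mul_left _
    · rw [pow_succ, mul_comm]
      exact mul_dvd_mul (hp.dvd_choose_self two_ne_zero (by have := hp.two_le; omega))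
        (pow_factorization_add_dvd_pow_succ hpm 1)
  · exact ((pow_factorization_add_dvd_pow_succ hpm 2).trans (pow_dvd_pow _ hi3)).mul_left _

theorem factorization_fib_mul {p m t : ℕ} (hp : p.Prime) (hm : m ≠ 0) (hpm : p ∣ fib m)
    (hp2 : p ≠ 2 ∨ 4 ∣ fib m) (ht : t ≠ 0) :
    (fib (m * t)).factorization p = (fib m).factorization p + t.factorization p := by
  obtain ⟨a, s, hps, rfl⟩ := exists_eq_pow_mul_and_not_dvd ht p hp.ne_one
  have hs : s ≠ 0 := by rintro rfl; exact hps (dvd_zero p)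
  rw [factorization_mul (pow_ne_zero _ hp.ne_zero) hs, Finsupp.add_apply, hp.factorization_pow,
    Finsupp.single_eq_same, factorization_eq_zero_of_not_dvd hps, add_zero]
  clear ht
  induction a generalizing m with
  | zero => simpa using factorization_fib_mul_of_not_dvd hp hm hpm hps
  | succ a ih =>
    have hdvd : fib m ∣ fib (m * p) := fib_dvd _ _ (dvd_mul_right m p)
    rw [show m * (p ^ (a + 1) * s) = m * p * (p ^ a * s) by ring,
      ih (mul_ne_zero hm hp.ne_zero) (hpm.trans hdvd) (hp2.imp_right (·.trans hdvd)),
      factorization_fib_mul_self hp hm hpm hp2, add_right_comm, add_assoc]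

theorem factorization_fib_two_of_mod_six_eq_three {n : ℕ} (hn : n % 6 = 3) :
    (fib n).factorization 2 = 1 := by
  obtain ⟨s, rfl⟩ : 3 ∣ n := by omega
  rw [factorization_fib_mul_of_not_dvd prime_two three_ne_zero (by decide) (by omega)]
  exact prime_two.factorization_self

theorem factorization_fib_two_le {n : ℕ} (hn : n ≠ 0) :
    (fib n).factorization 2 ≤ n.factorization 2 + 2 := by
  obtain ⟨r, rfl⟩ | h3 | h3 : 6 ∣ n ∨ n % 6 = 3 ∨ ¬ 3 ∣ n := by omega
  · have hr : r ≠ 0 := right_ne_zero_of_mul hn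
    have h8 : (fib 6).factorization 2 = 3 := by
      rw [show fib 6 = 2 ^ 3 by rfl, prime_two.factorization_pow, Finsupp.single_eq_same]
    have h6 : (6 * r).factorization 2 = r.factorization 2 + 1 := by
      rw [show 6 * r = 2 * (3 * r) by ring, factorization_mul two_ne_zero (by omega),
        factorization_mul three_ne_zero hr]
      simp [prime_two.factorization_self,
        factorization_eq_zero_of_not_dvd (show ¬ 2 ∣ 3 by decide)]
      omega
    rw [factorization_fib_mul prime_two (by norm_num) (by decide) (.inr (by decide)) hr, h8, h6]
    omega
  · rw [factorization_fib_two_of_mod_six_eq_three h3]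
    omega
  · rw [factorization_eq_zero_of_not_dvd (not_two_dvd_fib_of_not_three_dvd h3)]
    omega

end Nat

open Nat

theorem exact_div_fib_of_three_mod_six_of_not_two_pow_dvd_general (k l n : ℕ)
    (hk : 2 ≤ k) (hl : 3 ≤ l) (hn : 1 ≤ n)
    (hdvd : Nat.fib l ^ k ∣ Nat.fib n)
    (hmod : l % 6 = 3) (h2 : ¬ 2 ^ (k - 1) ∣ n / l) :
    Nat.fib l ^ (k - 2) ∣ n / l ∧ ¬ Nat.fib l ^ (k - 1) ∣ n / l := by
  have two_dvd : 2 ∣ fib l := fib_dvd 3 l (by omega)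
  refine ⟨?_, fun h ↦ h2 ((pow_dvd_pow_of_dvd two_dvd _).trans h)⟩
  obtain ⟨m, rfl⟩ : l ∣ n := (fib_dvd_fib_iff hl).1 ((dvd_pow_self _ (by omega)).trans hdvd)
  have hm : m ≠ 0 := by rintro rfl; omega
  have hfl : fib l ≠ 0 := by simp; omega
  rw [Nat.mul_div_cancel_left m (by omega), ← factorization_le_iff_dvd (by positivity) hm]
  have hkp := (factorization_le_iff_dvd (by positivity) (by simp; omega)).2 hdvd
  intro p
  specialize hkp p
  simp only [Nat.factorization_pow, Finsupp.smul_apply, smul_eq_mul] at hkp ⊢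
  rcases eq_or_ne ((fib l).factorization p) 0 with he | he
  · simp [he]
  have hp : p.Prime := prime_of_mem_primeFactors (Finsupp.mem_support_iff.2 he)
  have hpl : p ∣ fib l := dvd_of_mem_primeFactors (Finsupp.mem_support_iff.2 he)
  rcases eq_or_ne p 2 with rfl | hp2
  · have hlm : (l * m).factorization 2 = m.factorization 2 := by
      rw [Nat.factorization_mul (by omega) hm, Finsupp.add_apply,
        factorization_eq_zero_of_not_dvd (by omega), zero_add]
    have := factorization_fib_two_le (n := l * m) (mul_ne_zero (by omega) hm)
    rw [factorization_fib_two_of_mod_six_eq_three hmod] at hkp ⊢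
    omega
  · rw [factorization_fib_mul hp (by omega) hpl (.inl hp2) hm] at hkp
    have : (k - 2) * (fib l).factorization p + 2 * (fib l).factorization p
        = k * (fib l).factorization p := by rw [← add_mul, Nat.sub_add_cancel hk]
    omega

theorem exact_div_fib_of_three_mod_six_of_not_two_pow_dvd (k l n : ℕ)
    (hk : 2 ≤ k) (hl : 3 ≤ l) (hn : 1 ≤ n)
    (hdvd : Nat.fib l ^ k ∣ Nat.fib n) (hndvd : ¬ Nat.fib l ^ (k + 1) ∣ Nat.fib n)
    (hmod : l % 6 = 3) (h2 : ¬ 2 ^ (k - 1) ∣ n / l) :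
    Nat.fib l ^ (k - 2) ∣ n / l ∧ ¬ Nat.fib l ^ (k - 1) ∣ n / l :=
  exact_div_fib_of_three_mod_six_of_not_two_pow_dvd_general k l n hk hl hn hdvd hmod h2
end
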